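/- arXiv:1506.05513 — 11 statements merged into one kernel-verified Lean document; each statement's English description precedes it below -/
import Mathlib

section
/- Let R be a commutative ring with multiplicative identity. If every additive subgroup of (R, +) is also an ideal of R (i.e., for every additive subgroup H of R there is an ideal of R whose underlying set equals H), then R is isomorphic as a ring to ℤ or to ℤ_n for some positive integer n. -/
/-!
The additive subgroup generated by `1` is an ideal containing `1`, hence all of `R`, so every
element of `R` is an integer multiple of `1`. Then `ℤ → R` is onto and `R ≅ ℤ/(char R)`.
-/

theorem AddSubgroup.zmultiples_one_eq_top_of_coe_eq_ideal {R : Type*} [Ring R] {I : Ideal R}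
    (hI : (I : Set R) = AddSubgroup.zmultiples (1 : R)) :
    AddSubgroup.zmultiples (1 : R) = ⊤ := by
  have hI_top : I = ⊤ := I.eq_top_of_isUnit_mem
    (by rw [← SetLike.mem_coe, hI]; exact AddSubgroup.mem_zmultiples 1) isUnit_one
  exact SetLike.coe_injective (by rw [← hI, hI_top]; rfl)

theorem Int.cast_surjective_of_zmultiples_one_eq_top {R : Type*} [Ring R]
    (h : AddSubgroup.zmultiples (1 : R) = ⊤) : Function.Surjective (Int.cast : ℤ → R) := by
  intro r
  obtain ⟨k, hk⟩ := AddSubgroup.mem_zmultiples_iff.mp (h ▸ AddSubgroup.mem_top r)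
  exact ⟨k, by simpa using hk⟩

theorem ZMod.castHom_bijective_of_intCast_surjective {R : Type*} [Ring R] (n : ℕ) [CharP R n]
    (h : Function.Surjective (Int.cast : ℤ → R)) :
    Function.Bijective (ZMod.castHom (dvd_refl n) R) := by
  refine ⟨ZMod.castHom_injective R, fun r => ?_⟩
  obtain ⟨k, rfl⟩ := h r
  exact ⟨k, map_intCast _ k⟩

/-- If every additive subgroup of a unital commutative ring `R` is an ideal,
then `R` is isomorphic to `ℤ` or to `ℤ/n` for some positive integer `n`. -/
theorem subgroup_ideal_implies_Z_or_Zn (R : Type*) [CommRing R]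
    (h : ∀ H : AddSubgroup R, ∃ I : Ideal R, (I : Set R) = (H : Set R)) :
    Nonempty (R ≃+* ℤ) ∨ ∃ n : ℕ, 0 < n ∧ Nonempty (R ≃+* ZMod n) := by
  obtain ⟨I, hI⟩ := h (AddSubgroup.zmultiples 1)
  have hsurj := Int.cast_surjective_of_zmultiples_one_eq_top
    (AddSubgroup.zmultiples_one_eq_top_of_coe_eq_ideal hI)
  obtain ⟨n, hn⟩ := CharP.exists R
  have e := (RingEquiv.ofBijective _ (ZMod.castHom_bijective_of_intCast_surjective n hsurj)).symm
  rcases Nat.eq_zero_or_pos n with rfl | hpos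
  · -- `ZMod 0` is `ℤ` by definition.
    exact Or.inl ⟨e⟩
  · exact Or.inr ⟨n, hpos, ⟨e⟩⟩
end

section
/- Let R be an integral domain and let a be a non-zero element of R. The additive subgroup of (R, +) generated by a is an ideal of R if and only if R is isomorphic as a ring to ℤ or to ℤ_p for some prime p. -/
/-- If the integer cast is surjective, every additive subgroup is an ideal;
in particular the zmultiples of `a`. -/
lemma zmultiples_ideal_of_intCast_surjective {R : Type*} [CommRing R] (a : R)
    (hsurj : Function.Surjective (Int.cast : ℤ → R)) :
    ∃ I : Ideal R, (I : Set R) = (AddSubgroup.zmultiples a : Set R) := by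
  refine ⟨{ carrier := (AddSubgroup.zmultiples a : Set R),
            add_mem' := fun h1 h2 => add_mem h1 h2,
            zero_mem' := zero_mem _,
            smul_mem' := ?_ }, rfl⟩
  intro c x hx
  obtain ⟨m, hm⟩ := hsurj c
  obtain ⟨n, hn⟩ := hx
  refine ⟨m * n, ?_⟩
  simp only [smul_eq_mul, ← hm, ← hn, zsmul_eq_mul]
  push_cast
  ring

/-- In an integral domain `R`, the additive subgroup generated by a nonzero element `a`
is an ideal of `R` iff `R ≅ ℤ` or `R ≅ ℤ/p` for some prime `p`. -/
theorem zmultiples_ideal_iff_Z_or_Zp (R : Type*) [CommRing R] [IsDomain R]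
    (a : R) (ha : a ≠ 0) :
    (∃ I : Ideal R, (I : Set R) = (AddSubgroup.zmultiples a : Set R)) ↔
    (Nonempty (R ≃+* ℤ) ∨ ∃ p : ℕ, p.Prime ∧ Nonempty (R ≃+* ZMod p)) := by
  constructor
  · rintro ⟨I, hI⟩
    have haI : a ∈ I := by
      have : a ∈ (AddSubgroup.zmultiples a : Set R) := AddSubgroup.mem_zmultiples a
      rw [← hI] at this; exact this
    have hsurj : Function.Surjective (Int.cast : ℤ → R) := by
      intro r
      have hra : r * a ∈ (I : Set R) := I.mul_mem_left r haI
      rw [hI] at hra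
      obtain ⟨n, hn⟩ := hra
      have hn' : n • a = r * a := hn
      refine ⟨n, ?_⟩
      have h0 : ((n : R) - r) * a = 0 := by
        rw [sub_mul, ← zsmul_eq_mul, hn', sub_self]
      rcases mul_eq_zero.mp h0 with h | h
      · exact (sub_eq_zero.mp h)
      · exact absurd h ha
    haveI := ringChar.charP R
    rcases CharP.char_is_prime_or_zero R (ringChar R) with hp | h0
    · right
      haveI := Fact.mk hp
      set q := ringChar R
      let f : ZMod q →+* R := ZMod.castHom dvd_rfl R
      have hfs : Function.Surjective f := by
        intro r
        obtain ⟨n, hn⟩ := hsurj r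
        exact ⟨(n : ZMod q), by rw [map_intCast, hn]⟩
      have hfi : Function.Injective f := f.injective
      exact ⟨q, hp, ⟨(RingEquiv.ofBijective f ⟨hfi, hfs⟩).symm⟩⟩
    · left
      haveI : CharP R 0 := h0 ▸ ringChar.charP R
      haveI : CharZero R := CharP.charP_to_charZero R
      exact ⟨(RingEquiv.ofBijective (Int.castRingHom R)
        ⟨Int.cast_injective, hsurj⟩).symm⟩
  · rintro (he | ⟨p, hp, he⟩)
    · obtain ⟨e⟩ := he
      refine zmultiples_ideal_of_intCast_surjective a (fun r => ⟨e r, ?_⟩)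
      have h := map_intCast (e.symm : ℤ →+* R) (e r)
      rw [Int.cast_id] at h
      rw [← h]
      exact e.symm_apply_apply r
    · obtain ⟨e⟩ := he
      refine zmultiples_ideal_of_intCast_surjective a (fun r => ?_)
      obtain ⟨n, hn⟩ := ZMod.intCast_surjective (e r)
      refine ⟨n, ?_⟩
      have h := map_intCast (e.symm : ZMod p →+* R) n
      rw [hn] at h
      rw [← h]
      exact e.symm_apply_apply r
end

section
/- Let A be a k × k integer matrix with non-zero determinant and let H be the additive subgroup of ℤ^k spanned over ℤ by the columns of A (so H has rank k). Then H is an ideal of the product ring ℤ^k if and only if there exists a unimodular k × k integer matrix U such that AU is a diagonal matrix. -/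
/-!
The column span of `A` is the range of `v ↦ A *ᵥ v`. Every ideal of `ℤ^k` is principal, and the
principal ideal generated by `D` is exactly the range of `diagonal D`. Two square
matrices with the same range, one of them nonsingular, differ by a right factor of unit
determinant: each is the other times some matrix, and the determinants of the two factors
multiply to `1` after cancelling `det A`.
-/

open Matrix

namespace Matrix

variable {m n p R : Type*} [Fintype n] [CommRing R]

theorem range_mulVecLin_mul_of_isUnit_det [DecidableEq n] (A : Matrix m n R) {U : Matrix n n R}
    (hU : IsUnit U.det) :
    LinearMap.range (A * U).mulVecLin = LinearMap.range A.mulVecLin := by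
  rw [mulVecLin_mul, LinearMap.range_comp_of_range_eq_top]
  exact LinearMap.range_eq_top.mpr
    (mulVec_surjective_iff_isUnit.mpr ((isUnit_iff_isUnit_det U).mpr hU))

theorem exists_mul_eq_of_range_mulVecLin_le [Fintype p] [DecidableEq p] {A : Matrix m n R}
    {B : Matrix m p R} (h : LinearMap.range B.mulVecLin ≤ LinearMap.range A.mulVecLin) :
    ∃ U : Matrix n p R, A * U = B := by
  have hcol : ∀ j, ∃ u, A *ᵥ u = B.col j := fun j => by
    simpa [mulVec_single_one] using h ⟨Pi.single j 1, rfl⟩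
  choose u hu using hcol
  refine ⟨(of u)ᵀ, ?_⟩
  ext i j
  simpa [mulVec, dotProduct, mul_apply] using congrFun (hu j) i

theorem exists_isUnit_det_mul_eq_of_range_mulVecLin_eq [IsDomain R] [DecidableEq n]
    {A B : Matrix n n R} (hA : A.det ≠ 0)
    (h : LinearMap.range A.mulVecLin = LinearMap.range B.mulVecLin) :
    ∃ U : Matrix n n R, IsUnit U.det ∧ A * U = B := by
  obtain ⟨U, hU⟩ := exists_mul_eq_of_range_mulVecLin_le h.ge
  obtain ⟨V, hV⟩ := exists_mul_eq_of_range_mulVecLin_le h.le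
  have hUV : A.det * (U.det * V.det) = A.det * 1 := by
    rw [← det_mul, ← det_mul, ← Matrix.mul_assoc, hU, hV, mul_one]
  exact ⟨U, IsUnit.of_mul_eq_one _ (mul_left_cancel₀ hA hUV), hU⟩

theorem coe_range_mulVecLin_diagonal [DecidableEq n] (d : n → R) :
    (LinearMap.range (diagonal d).mulVecLin : Set (n → R)) = Ideal.span {d} := by
  have hmul : ∀ v, diagonal d *ᵥ v = v * d := fun v => funext fun i => by
    simp [mulVec_diagonal, mul_comm]
  ext x
  simp [Ideal.mem_span_singleton', hmul]

end Matrix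

/-- The lattice spanned by the columns of a `k × k` integer matrix `A` with nonzero
determinant is an ideal of `ℤ^k` iff `AU` is diagonal for some unimodular `U`. -/
theorem span_columns_ideal_iff_diagonalizable (k : ℕ) (A : Matrix (Fin k) (Fin k) ℤ)
    (hA : A.det ≠ 0) :
    (∃ I : Ideal (Fin k → ℤ),
      (I : Set (Fin k → ℤ)) = (Submodule.span ℤ (Set.range Aᵀ) : Set (Fin k → ℤ))) ↔
    ∃ U : Matrix (Fin k) (Fin k) ℤ, (U.det = 1 ∨ U.det = -1) ∧
      ∃ D : Fin k → ℤ, A * U = Matrix.diagonal D := by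
  change (∃ I : Ideal (Fin k → ℤ), (I : Set (Fin k → ℤ)) = Submodule.span ℤ (Set.range A.col)) ↔ _
  simp_rw [← range_mulVecLin, ← Int.isUnit_iff]
  constructor
  · rintro ⟨I, hI⟩
    obtain ⟨D, rfl⟩ := IsPrincipalIdealRing.principal I
    have hrange : LinearMap.range A.mulVecLin = LinearMap.range (diagonal D).mulVecLin :=
      SetLike.coe_injective (by rw [← hI, coe_range_mulVecLin_diagonal])
    obtain ⟨U, hU, hAU⟩ := exists_isUnit_det_mul_eq_of_range_mulVecLin_eq hA hrange
    exact ⟨U, hU, D, hAU⟩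
  · rintro ⟨U, hU, D, hAU⟩
    refine ⟨Ideal.span {D}, ?_⟩
    rw [← coe_range_mulVecLin_diagonal, ← hAU, range_mulVecLin_mul_of_isUnit_det _ hU]
end

section
/- Let A be a k × k integer matrix with non-zero determinant, with adjugate matrix A* = (a*_{ij}), and let H be the additive subgroup of ℤ^k spanned over ℤ by the columns of A. Then H is an ideal of the product ring ℤ^k if and only if there exist non-zero integers d_1, …, d_k such that det(A) = ±(d_1 d_2 ⋯ d_k) and, for each i, the integer det(A)/d_i divides every entry a*_{1i}, …, a*_{ki} of the i-th column of A* (equivalently, det(A)/d_i divides gcd(a*_{1i}, …, a*_{ki})). -/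
/-! An ideal of `ℤ^k` is a product `∏ dᵢℤ`, i.e. the column lattice of `diag d`. Two
nonsingular matrices have the same column lattice iff they differ by a right factor `B` with
`det B = ±1`. Given `det A = dᵢ eᵢ`, the equation `A B = diag d` is equivalent, after multiplying
by the adjugate, to `A* = B diag e`, so an integral solution `B` exists iff each `eᵢ` divides the
`i`-th column of `A*`; and `det A · det B = ∏ dᵢ` makes `B` unimodular iff `det A = ±∏ dᵢ`. -/

open Matrix

namespace Ideal

variable {ι R : Type*} [Fintype ι] [DecidableEq ι]

theorem eq_pi_map_eval [CommSemiring R] (I : Ideal (ι → R)) :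
    I = pi fun i => I.map (Pi.evalRingHom (fun _ => R) i) := by
  refine le_antisymm (fun x hx i => mem_map_of_mem _ hx) fun x hx => ?_
  rw [← Finset.univ_sum_single x]
  refine sum_mem _ fun i _ => ?_
  obtain ⟨y, hy, hyx⟩ := (mem_map_iff_of_surjective _ (Function.surjective_eval i)).1 (hx i)
  rw [← hyx]
  simpa only [Pi.evalRingHom_apply, ← Pi.single_mul_left, one_mul] using
    I.mul_mem_left (Pi.single i 1) hy

theorem exists_eq_pi_span_singleton [CommRing R] [IsPrincipalIdealRing R] (I : Ideal (ι → R)) :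
    ∃ d : ι → R, I = pi fun i => span {d i} :=
  ⟨fun i => Submodule.IsPrincipal.generator (I.map (Pi.evalRingHom (fun _ => R) i)), by
    simp_rw [span_singleton_generator]; exact eq_pi_map_eval I⟩

theorem coe_pi_span_singleton_eq_range_diagonal [CommSemiring R] (d : ι → R) :
    (pi fun i => span {d i} : Set (ι → R)) = LinearMap.range (diagonal d).mulVecLin := by
  ext x
  simp [mem_span_singleton', mulVec_diagonal, funext_iff, mul_comm]

theorem exists_coe_eq_iff_exists_eq_range_diagonal [CommRing R] [IsPrincipalIdealRing R]
    (H : Submodule R (ι → R)) :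
    (∃ I : Ideal (ι → R), (I : Set (ι → R)) = H) ↔
      ∃ d : ι → R, H = LinearMap.range (diagonal d).mulVecLin := by
  constructor
  · rintro ⟨I, hI⟩
    obtain ⟨d, rfl⟩ := exists_eq_pi_span_singleton I
    exact ⟨d, SetLike.coe_injective (hI.symm.trans (coe_pi_span_singleton_eq_range_diagonal d))⟩
  · rintro ⟨d, rfl⟩
    exact ⟨_, coe_pi_span_singleton_eq_range_diagonal d⟩

end Ideal

namespace Matrix

variable {m n p R : Type*} [Fintype n] [CommRing R]

theorem mul_left_cancel_of_det_ne_zero [DecidableEq n] [IsDomain R] {M : Matrix n n R}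
    (hM : M.det ≠ 0) {X Y : Matrix n m R} (h : M * X = M * Y) : X = Y := by
  have h' : M.det • X = M.det • Y := by
    simpa only [← Matrix.mul_assoc, adjugate_mul, Matrix.smul_mul, Matrix.one_mul]
      using congrArg (M.adjugate * ·) h
  ext i j
  exact mul_left_cancel₀ hM (congrFun₂ h' i j)

theorem mul_right_cancel_of_det_ne_zero [DecidableEq n] [IsDomain R] {M : Matrix n n R}
    (hM : M.det ≠ 0) {X Y : Matrix m n R} (h : X * M = Y * M) : X = Y := by
  have h' : M.det • X = M.det • Y := by
    simpa only [Matrix.mul_assoc, mul_adjugate, Matrix.mul_smul, Matrix.mul_one]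
      using congrArg (· * M.adjugate) h
  ext i j
  exact mul_left_cancel₀ hM (congrFun₂ h' i j)

theorem range_mulVecLin_le_iff [Fintype p] (A : Matrix m n R) (D : Matrix m p R) :
    LinearMap.range A.mulVecLin ≤ LinearMap.range D.mulVecLin ↔
      ∃ B : Matrix p n R, D * B = A := by
  constructor
  · intro h
    rw [range_mulVecLin, Submodule.span_le, Set.range_subset_iff] at h
    choose c hc using h
    refine ⟨of fun l j => c j l, ?_⟩
    ext i j
    simpa [mul_apply, mulVec, dotProduct] using congrFun (hc j) i
  · rintro ⟨B, rfl⟩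
    rw [mulVecLin_mul]
    exact LinearMap.range_comp_le_range _ _

theorem range_mulVecLin_eq_iff [DecidableEq n] [IsDomain R] {A : Matrix n n R}
    (hA : A.det ≠ 0) (D : Matrix n n R) :
    LinearMap.range A.mulVecLin = LinearMap.range D.mulVecLin ↔
      ∃ B : Matrix n n R, IsUnit B.det ∧ A * B = D := by
  simp only [le_antisymm_iff, range_mulVecLin_le_iff]
  constructor
  · rintro ⟨⟨C, hC⟩, ⟨B, rfl⟩⟩
    have hBC : B * C = 1 :=
      mul_left_cancel_of_det_ne_zero hA (by rw [← Matrix.mul_assoc, hC, Matrix.mul_one])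
    exact ⟨B, IsUnit.of_mul_eq_one _ (by rw [← det_mul, hBC, det_one]), rfl⟩
  · rintro ⟨B, hB, rfl⟩
    exact ⟨⟨B⁻¹, mul_nonsing_inv_cancel_right B A hB⟩, ⟨B, rfl⟩⟩

theorem exists_mul_eq_diagonal_iff_dvd_adjugate [DecidableEq n] [IsDomain R]
    {A : Matrix n n R} (hA : A.det ≠ 0) {d e : n → R} (hde : ∀ i, d i * e i = A.det) :
    (∃ B : Matrix n n R, A * B = diagonal d) ↔ ∀ i j, e i ∣ A.adjugate j i := by
  have hDE : diagonal d * diagonal e = A.det • (1 : Matrix n n R) := by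
    rw [diagonal_mul_diagonal, smul_one_eq_diagonal]
    simp only [hde]
  have hE : (diagonal e).det ≠ 0 := by
    rw [det_diagonal, Finset.prod_ne_zero_iff]
    exact fun i _ he => hA (by rw [← hde i, he, mul_zero])
  have key : ∀ B, A * B = diagonal d ↔ A.adjugate = B * diagonal e := fun B =>
    ⟨fun h => mul_left_cancel_of_det_ne_zero hA
      (by rw [mul_adjugate, ← Matrix.mul_assoc, h, hDE]),
     fun h => mul_right_cancel_of_det_ne_zero hE
      (by rw [Matrix.mul_assoc, ← h, mul_adjugate, hDE])⟩
  simp only [key]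
  constructor
  · rintro ⟨B, hB⟩ i j
    rw [hB, mul_diagonal]
    exact dvd_mul_left _ _
  · intro h
    choose c hc using h
    exact ⟨of fun j i => c i j, by ext j i; rw [mul_diagonal, hc, mul_comm]; rfl⟩

theorem isUnit_det_iff_associated_of_mul_eq_diagonal [DecidableEq n] [IsDomain R]
    {A B : Matrix n n R} (hA : A.det ≠ 0) {d : n → R} (h : A * B = diagonal d) :
    IsUnit B.det ↔ Associated A.det (∏ i, d i) := by
  have hdet : A.det * B.det = ∏ i, d i := by rw [← det_mul, h, det_diagonal]
  refine ⟨fun hB => ⟨hB.unit, hdet⟩, fun ⟨u, hu⟩ => ?_⟩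
  rw [mul_left_cancel₀ hA (hdet.trans hu.symm)]
  exact u.isUnit

theorem exists_isUnit_det_mul_eq_diagonal_iff [DecidableEq n] {A : Matrix n n ℤ}
    (hA : A.det ≠ 0) (d : n → ℤ) :
    (∃ B : Matrix n n ℤ, IsUnit B.det ∧ A * B = diagonal d) ↔
      (∀ i, d i ≠ 0) ∧ Associated A.det (∏ i, d i) ∧ ∀ i j, A.det / d i ∣ A.adjugate j i := by
  have dvd_det (hd : Associated A.det (∏ i, d i)) (i : n) : d i ∣ A.det :=
    (Finset.dvd_prod_of_mem d (Finset.mem_univ i)).trans hd.symm.dvd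
  have hde (hd : Associated A.det (∏ i, d i)) (i : n) : d i * (A.det / d i) = A.det :=
    Int.mul_ediv_cancel' (dvd_det hd i)
  constructor
  · rintro ⟨B, hB, hAB⟩
    have hd := (isUnit_det_iff_associated_of_mul_eq_diagonal hA hAB).1 hB
    refine ⟨fun i hi => hA (zero_dvd_iff.1 (hi ▸ dvd_det hd i)), hd, ?_⟩
    exact (exists_mul_eq_diagonal_iff_dvd_adjugate hA (hde hd)).1 ⟨B, hAB⟩
  · rintro ⟨-, hd, hadj⟩
    obtain ⟨B, hAB⟩ := (exists_mul_eq_diagonal_iff_dvd_adjugate hA (hde hd)).2 hadj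
    exact ⟨B, (isUnit_det_iff_associated_of_mul_eq_diagonal hA hAB).2 hd, hAB⟩

end Matrix

/-- The lattice spanned by the columns of a `k × k` integer matrix `A` with nonzero
determinant is an ideal of `ℤ^k` iff there are nonzero integers `d₁, …, d_k` with
`det A = ±(d₁⋯d_k)` and `det A / dᵢ` dividing every entry of the `i`-th column of
the adjugate of `A`. -/
theorem span_columns_ideal_iff_adjugate (k : ℕ) (A : Matrix (Fin k) (Fin k) ℤ)
    (hA : A.det ≠ 0) :
    (∃ I : Ideal (Fin k → ℤ),
      (I : Set (Fin k → ℤ)) = (Submodule.span ℤ (Set.range Aᵀ) : Set (Fin k → ℤ))) ↔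
    ∃ d : Fin k → ℤ, (∀ i, d i ≠ 0) ∧
      (A.det = ∏ i, d i ∨ A.det = -∏ i, d i) ∧
      ∀ i j : Fin k, (A.det / d i) ∣ A.adjugate j i := by
  rw [show Set.range Aᵀ = Set.range A.col from rfl, ← range_mulVecLin,
    Ideal.exists_coe_eq_iff_exists_eq_range_diagonal]
  simp_rw [range_mulVecLin_eq_iff hA, exists_isUnit_det_mul_eq_diagonal_iff hA,
    Int.associated_iff]
end

section
/- Let a, b, c, d be integers with ad − bc ≠ 0, and let L be the additive subgroup of ℤ × ℤ generated by the vectors (a, b) and (c, d) (a rank 2 subgroup). Then L is an ideal of the product ring ℤ × ℤ if and only if ad − bc divides gcd(a, c) · gcd(b, d). -/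
lemma mem_iff_aux (a b c d x y : ℤ) (h : a * d - b * c ≠ 0) :
    (x, y) ∈ AddSubgroup.closure ({(a, b), (c, d)} : Set (ℤ × ℤ)) ↔
      (a * d - b * c) ∣ (x * d - y * c) ∧ (a * d - b * c) ∣ (a * y - b * x) := by
  rw [AddSubgroup.mem_closure_pair]
  constructor
  · rintro ⟨m, n, hmn⟩
    have h1 : x = m * a + n * c := by
      have := congrArg Prod.fst hmn; simpa [mul_comm] using this.symm
    have h2 : y = m * b + n * d := by
      have := congrArg Prod.snd hmn; simpa [mul_comm] using this.symm
    subst h1; subst h2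
    exact ⟨⟨m, by ring⟩, ⟨n, by ring⟩⟩
  · rintro ⟨⟨m, hm⟩, ⟨n, hn⟩⟩
    refine ⟨m, n, ?_⟩
    have hx : (a * d - b * c) * (m * a + n * c) = (a * d - b * c) * x := by
      have : (x * d - y * c) * a + (a * y - b * x) * c = (a * d - b * c) * x := by ring
      rw [← this, hm, hn]; ring
    have hy : (a * d - b * c) * (m * b + n * d) = (a * d - b * c) * y := by
      have : (x * d - y * c) * b + (a * y - b * x) * d = (a * d - b * c) * y := by ring
      rw [← this, hm, hn]; ring
    have hx' := mul_left_cancel₀ h hx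
    have hy' := mul_left_cancel₀ h hy
    have key : m • ((a, b) : ℤ × ℤ) + n • ((c, d) : ℤ × ℤ) = (m * a + n * c, m * b + n * d) := by
      simp [Prod.ext_iff, smul_eq_mul]
    rw [key, Prod.ext_iff]
    exact ⟨hx', hy'⟩

/-- The rank-2 subgroup of `ℤ × ℤ` generated by `(a, b)` and `(c, d)` (with
`ad - bc ≠ 0`) is an ideal of `ℤ × ℤ` iff `ad - bc` divides `gcd(a, c) * gcd(b, d)`. -/
theorem rank_two_subgroup_ideal_iff (a b c d : ℤ) (h : a * d - b * c ≠ 0) :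
    (∃ I : Ideal (ℤ × ℤ),
      (I : Set (ℤ × ℤ)) = (AddSubgroup.closure {(a, b), (c, d)} : Set (ℤ × ℤ))) ↔
    (a * d - b * c) ∣ (Int.gcd a c : ℤ) * (Int.gcd b d : ℤ) := by
  constructor
  · rintro ⟨I, hI⟩
    have hmem : ∀ p : ℤ × ℤ, p ∈ I ↔ p ∈ AddSubgroup.closure ({(a, b), (c, d)} : Set (ℤ × ℤ)) := by
      intro p
      exact Set.ext_iff.mp hI p
    have hab : (a, b) ∈ I := (hmem _).mpr (AddSubgroup.subset_closure (by simp))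
    have hcd : (c, d) ∈ I := (hmem _).mpr (AddSubgroup.subset_closure (by simp))
    have h1 : ((1, 0) : ℤ × ℤ) * (a, b) ∈ I := I.mul_mem_left _ hab
    have h2 : ((1, 0) : ℤ × ℤ) * (c, d) ∈ I := I.mul_mem_left _ hcd
    have h1' : ((a, 0) : ℤ × ℤ) ∈ AddSubgroup.closure ({(a, b), (c, d)} : Set (ℤ × ℤ)) := by
      have := (hmem _).mp h1; simpa using this
    have h2' : ((c, 0) : ℤ × ℤ) ∈ AddSubgroup.closure ({(a, b), (c, d)} : Set (ℤ × ℤ)) := by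
      have := (hmem _).mp h2; simpa using this
    obtain ⟨had, hba⟩ := (mem_iff_aux a b c d a 0 h).mp h1'
    obtain ⟨hcd', hbc⟩ := (mem_iff_aux a b c d c 0 h).mp h2'
    -- had : D ∣ a*d - 0*c, hba : D ∣ a*0 - b*a, hcd' : D ∣ c*d - 0*c, hbc : D ∣ a*0 - b*c
    have Dab : (a * d - b * c) ∣ a * b := by
      obtain ⟨k, hk⟩ := hba; exact ⟨-k, by linear_combination -hk⟩
    have Dad : (a * d - b * c) ∣ a * d := by simpa using had
    have Dcb : (a * d - b * c) ∣ c * b := by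
      obtain ⟨k, hk⟩ := hbc; exact ⟨-k, by linear_combination -hk⟩
    have Dcd : (a * d - b * c) ∣ c * d := by simpa using hcd'
    have key : ((Int.gcd a c : ℤ)) * ((Int.gcd b d : ℤ)) =
        (Int.gcdA a c * Int.gcdA b d) * (a * b) + (Int.gcdA a c * Int.gcdB b d) * (a * d) +
        (Int.gcdB a c * Int.gcdA b d) * (c * b) + (Int.gcdB a c * Int.gcdB b d) * (c * d) := by
      rw [Int.gcd_eq_gcd_ab a c, Int.gcd_eq_gcd_ab b d]; ring
    rw [key]
    exact dvd_add (dvd_add (dvd_add (Dab.mul_left _) (Dad.mul_left _)) (Dcb.mul_left _)) (Dcd.mul_left _)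
  · intro hG
    have Dab : (a * d - b * c) ∣ a * b :=
      hG.trans (mul_dvd_mul (Int.gcd_dvd_left ..) (Int.gcd_dvd_left ..))
    have Dad : (a * d - b * c) ∣ a * d :=
      hG.trans (mul_dvd_mul (Int.gcd_dvd_left ..) (Int.gcd_dvd_right ..))
    have Dcb : (a * d - b * c) ∣ c * b :=
      hG.trans (mul_dvd_mul (Int.gcd_dvd_right ..) (Int.gcd_dvd_left ..))
    have Dcd : (a * d - b * c) ∣ c * d :=
      hG.trans (mul_dvd_mul (Int.gcd_dvd_right ..) (Int.gcd_dvd_right ..))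
    have Dbc : (a * d - b * c) ∣ b * c := by
      have := Dad.sub (dvd_refl (a * d - b * c)); simpa using this
    refine ⟨{ carrier := (AddSubgroup.closure ({(a, b), (c, d)} : Set (ℤ × ℤ)) : Set (ℤ × ℤ))
              add_mem' := fun hp hq => AddSubgroup.add_mem _ hp hq
              zero_mem' := AddSubgroup.zero_mem _
              smul_mem' := ?_ }, rfl⟩
    rintro ⟨r₁, r₂⟩ ⟨x, y⟩ hx
    obtain ⟨m, n, hmn⟩ := AddSubgroup.mem_closure_pair.mp hx
    have h1 : x = m * a + n * c := by
      have := congrArg Prod.fst hmn; simpa [mul_comm] using this.symm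
    have h2 : y = m * b + n * d := by
      have := congrArg Prod.snd hmn; simpa [mul_comm] using this.symm
    obtain ⟨p, hp⟩ := Dad
    obtain ⟨q, hq⟩ := Dcd
    obtain ⟨s, hs⟩ := Dbc
    obtain ⟨t, ht⟩ := Dab
    have hx' : ((r₁, r₂) : ℤ × ℤ) • ((x, y) : ℤ × ℤ) = ((r₁ * x, r₂ * y) : ℤ × ℤ) := rfl
    show _ ∈ (AddSubgroup.closure ({(a, b), (c, d)} : Set (ℤ × ℤ)) : Set (ℤ × ℤ))
    rw [hx']
    apply (mem_iff_aux a b c d (r₁ * x) (r₂ * y) h).mpr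
    subst h1; subst h2
    constructor
    · exact ⟨r₁ * m * p + r₁ * n * q - r₂ * m * s - r₂ * n * q, by
        linear_combination (r₁ * m) * hp + (r₁ * n) * hq - (r₂ * m) * hs - (r₂ * n) * hq⟩
    · exact ⟨r₂ * m * t + r₂ * n * p - r₁ * m * t - r₁ * n * s, by
        linear_combination (r₂ * m) * ht + (r₂ * n) * hp - (r₁ * m) * ht - (r₁ * n) * hs⟩
end

section
/- Let a, b, c, d be integers such that ad − bc is a prime element of ℤ, and let L be the additive subgroup of ℤ × ℤ generated by (a, b) and (c, d). Then L is an ideal of the product ring ℤ × ℤ if and only if ad − bc divides gcd(a, c) or ad − bc divides gcd(b, d). -/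
/-! The map `x ↦ (1, 0) * x` is additive and, together with the identity, generates all
multiplications of `ℤ × ℤ` over `ℤ`; so the lattice `L` is an ideal iff `(a, 0)` and `(c, 0)`
lie in `L`. By Cramer's rule, `(u, v) ∈ L` iff `Δ = ad - bc` divides `du - cv` and `av - bu`,
so the condition becomes that `Δ` divides `ab`, `ad`, `cb` and `cd`. For `Δ` prime this says
that `Δ` divides both of `a, c` or both of `b, d`. -/

lemma AddSubgroup.exists_ideal_coe_eq_iff {R : Type*} [Ring R] (H : AddSubgroup R) :
    (∃ I : Ideal R, (I : Set R) = H) ↔ ∀ r x, x ∈ H → r * x ∈ H := by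
  constructor
  · rintro ⟨I, hI⟩ r x hx
    rw [← SetLike.mem_coe, ← hI] at hx ⊢
    exact I.mul_mem_left r hx
  · intro hmul
    exact ⟨{ H.toAddSubmonoid with smul_mem' := hmul }, rfl⟩

lemma AddSubgroup.forall_mul_mem_closure_iff {R : Type*} [Ring R] (e : R) (s : Set R) :
    (∀ x ∈ closure s, e * x ∈ closure s) ↔ ∀ x ∈ s, e * x ∈ closure s := by
  change closure s ≤ (closure s).comap (AddMonoidHom.mulLeft e) ↔ _
  rw [closure_le]
  rfl

lemma Int.prod_forall_mul_mem_iff (H : AddSubgroup (ℤ × ℤ)) :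
    (∀ r x, x ∈ H → r * x ∈ H) ↔ ∀ x ∈ H, ((1, 0) : ℤ × ℤ) * x ∈ H := by
  refine ⟨fun hmul x hx => hmul _ x hx, fun he r x hx => ?_⟩
  have hdecomp : r * x = r.1 • ((1, 0) * x) + r.2 • (x - (1, 0) * x) := by
    ext <;> simp [mul_comm]
  rw [hdecomp]
  exact H.add_mem (H.zsmul_mem (he x hx) _) (H.zsmul_mem (H.sub_mem hx (he x hx)) _)

lemma Int.mem_closure_pair_iff_dvd {a b c d : ℤ} (hdet : a * d - b * c ≠ 0) (u v : ℤ) :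
    (u, v) ∈ AddSubgroup.closure {(a, b), (c, d)} ↔
      a * d - b * c ∣ d * u - c * v ∧ a * d - b * c ∣ a * v - b * u := by
  rw [AddSubgroup.mem_closure_pair]
  simp only [Prod.ext_iff, Prod.fst_add, Prod.snd_add, Prod.smul_fst, Prod.smul_snd, smul_eq_mul]
  constructor
  · rintro ⟨m, n, rfl, rfl⟩
    exact ⟨⟨m, by ring⟩, ⟨n, by ring⟩⟩
  · rintro ⟨⟨m, hm⟩, ⟨n, hn⟩⟩
    refine ⟨m, n, mul_left_cancel₀ hdet ?_, mul_left_cancel₀ hdet ?_⟩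
    · linear_combination -a * hm - c * hn
    · linear_combination -b * hm - d * hn

lemma Prime.dvd_mul_pairs_iff {M : Type*} [CommMonoidWithZero M] {p : M} (hp : Prime p)
    (a b c d : M) :
    (p ∣ b * a ∧ p ∣ d * a ∧ p ∣ b * c ∧ p ∣ d * c) ↔ (p ∣ a ∧ p ∣ c) ∨ (p ∣ b ∧ p ∣ d) := by
  constructor
  · rintro ⟨hba, hda, hbc, hdc⟩
    by_cases ha : p ∣ a
    · by_cases hc : p ∣ c
      · exact .inl ⟨ha, hc⟩
      · exact .inr ⟨(hp.dvd_or_dvd hbc).resolve_right hc, (hp.dvd_or_dvd hdc).resolve_right hc⟩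
    · exact .inr ⟨(hp.dvd_or_dvd hba).resolve_right ha, (hp.dvd_or_dvd hda).resolve_right ha⟩
  · rintro (⟨ha, hc⟩ | ⟨hb, hd⟩)
    · exact ⟨ha.mul_left _, ha.mul_left _, hc.mul_left _, hc.mul_left _⟩
    · exact ⟨hb.mul_right _, hd.mul_right _, hb.mul_right _, hd.mul_right _⟩

/-- If `ad - bc` is a prime element of `ℤ`, then the subgroup of `ℤ × ℤ` generated by
`(a, b)` and `(c, d)` is an ideal iff `ad - bc` divides `gcd(a, c)` or `gcd(b, d)`. -/
theorem subgroup_ideal_iff_of_det_prime (a b c d : ℤ) (h : Prime (a * d - b * c)) :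
    (∃ I : Ideal (ℤ × ℤ),
      (I : Set (ℤ × ℤ)) = (AddSubgroup.closure {(a, b), (c, d)} : Set (ℤ × ℤ))) ↔
    ((a * d - b * c) ∣ (Int.gcd a c : ℤ) ∨ (a * d - b * c) ∣ (Int.gcd b d : ℤ)) := by
  rw [AddSubgroup.exists_ideal_coe_eq_iff, Int.prod_forall_mul_mem_iff,
    AddSubgroup.forall_mul_mem_closure_iff, Int.dvd_coe_gcd_iff, Int.dvd_coe_gcd_iff,
    ← h.dvd_mul_pairs_iff a b c d]
  simp only [Set.mem_insert_iff, Set.mem_singleton_iff, forall_eq_or_imp, forall_eq,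
    Prod.mk_mul_mk, one_mul, zero_mul, Int.mem_closure_pair_iff_dvd h.ne_zero, mul_zero,
    sub_zero, zero_sub, dvd_neg]
  tauto
end

section
/- Let n, m be positive integers and let a, b be integers with 1 ≤ a < n and 1 ≤ b < m. The additive subgroup of ℤ_n × ℤ_m generated by the single element (a mod n, b mod m) is an ideal of the product ring ℤ_n × ℤ_m if and only if gcd( n/gcd(a, n), m/gcd(b, m) ) = 1. -/
lemma zsmul_natCast_eq_zero_iff (n a : ℕ) (hn : n ≠ 0) (c : ℤ) :
    c • ((a : ZMod n)) = 0 ↔ ((n / Nat.gcd a n : ℕ) : ℤ) ∣ c := by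
  rw [← addOrderOf_dvd_iff_zsmul_eq_zero, ZMod.addOrderOf_coe a hn, Nat.gcd_comm]

/-- For `1 ≤ a < n` and `1 ≤ b < m`, the subgroup of `ℤ_n × ℤ_m` generated by
`(a, b)` is an ideal iff `gcd(n / gcd(a, n), m / gcd(b, m)) = 1`. -/
theorem zmod_prod_cyclic_subgroup_ideal_iff (n m a b : ℕ)
    (ha1 : 1 ≤ a) (han : a < n) (hb1 : 1 ≤ b) (hbm : b < m) :
    (∃ I : Ideal (ZMod n × ZMod m),
      (I : Set (ZMod n × ZMod m)) =
        (AddSubgroup.zmultiples ((a : ZMod n), (b : ZMod m)) : Set (ZMod n × ZMod m))) ↔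
    Nat.gcd (n / Nat.gcd a n) (m / Nat.gcd b m) = 1 := by
  have hn : n ≠ 0 := by omega
  have hm : m ≠ 0 := by omega
  set n' : ℕ := n / Nat.gcd a n with hn'
  set m' : ℕ := m / Nat.gcd b m with hm'
  have key1 : ∀ c : ℤ, c • (a : ZMod n) = 0 ↔ (n' : ℤ) ∣ c := fun c =>
    zsmul_natCast_eq_zero_iff n a hn c
  have key2 : ∀ c : ℤ, c • (b : ZMod m) = 0 ↔ (m' : ℤ) ∣ c := fun c =>
    zsmul_natCast_eq_zero_iff m b hm c
  constructor
  · rintro ⟨I, hI⟩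
    have hab : ((a : ZMod n), (b : ZMod m)) ∈ I := by
      rw [← SetLike.mem_coe, hI]
      exact AddSubgroup.mem_zmultiples _
    have h2 : ((1, 0) : ZMod n × ZMod m) * ((a : ZMod n), (b : ZMod m)) ∈ I :=
      I.mul_mem_left _ hab
    rw [← SetLike.mem_coe, hI, SetLike.mem_coe, AddSubgroup.mem_zmultiples_iff] at h2
    obtain ⟨k, hk⟩ := h2
    rw [Prod.smul_mk, Prod.mk_mul_mk, one_mul, zero_mul, Prod.mk.injEq] at hk
    have d1 : (n' : ℤ) ∣ (k - 1) := (key1 _).mp (by rw [sub_smul, one_smul, hk.1, sub_self])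
    have d2 : (m' : ℤ) ∣ k := (key2 _).mp hk.2
    have h1 : (Nat.gcd n' m' : ℤ) ∣ (k - 1) :=
      dvd_trans (Int.natCast_dvd_natCast.mpr (Nat.gcd_dvd_left _ _)) d1
    have h2' : (Nat.gcd n' m' : ℤ) ∣ k :=
      dvd_trans (Int.natCast_dvd_natCast.mpr (Nat.gcd_dvd_right _ _)) d2
    have hdvd1 : (Nat.gcd n' m' : ℤ) ∣ 1 := by
      have := dvd_sub h2' h1
      simpa using this
    exact Nat.eq_one_of_dvd_one (by exact_mod_cast hdvd1)
  · intro hcop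
    have hco : IsCoprime (n' : ℤ) (m' : ℤ) := by
      rw [Int.isCoprime_iff_gcd_eq_one]
      simpa [Int.gcd] using hcop
    obtain ⟨u, v, hbez⟩ := hco
    refine ⟨{ carrier := (AddSubgroup.zmultiples ((a : ZMod n), (b : ZMod m)) :
                Set (ZMod n × ZMod m)),
              add_mem' := fun h1 h2 => AddSubgroup.add_mem _ h1 h2,
              zero_mem' := AddSubgroup.zero_mem _,
              smul_mem' := ?_ }, rfl⟩
    intro r x hx
    rw [SetLike.mem_coe, AddSubgroup.mem_zmultiples_iff] at hx ⊢
    obtain ⟨k, rfl⟩ := hx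
    obtain ⟨x', hx'⟩ := ZMod.intCast_surjective r.1
    obtain ⟨y', hy'⟩ := ZMod.intCast_surjective r.2
    refine ⟨x' * k * v * m' + y' * k * u * n', ?_⟩
    have e1 : ((x' * k * v * ↑m' + y' * k * u * ↑n') : ℤ) • (a : ZMod n)
        = (x' * k) • (a : ZMod n) := by
      rw [← sub_eq_zero, ← sub_smul]
      exact (key1 _).mpr ⟨u * (y' * k - x' * k), by linear_combination (x' * k) * hbez⟩
    have e2 : ((x' * k * v * ↑m' + y' * k * u * ↑n') : ℤ) • (b : ZMod m)
        = (y' * k) • (b : ZMod m) := by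
      rw [← sub_eq_zero, ← sub_smul]
      exact (key2 _).mpr ⟨v * (x' * k - y' * k), by linear_combination (y' * k) * hbez⟩
    have hr : r = ((x' : ZMod n), (y' : ZMod m)) := by
      ext <;> simp [hx', hy']
    rw [Prod.smul_mk, e1, e2, hr, smul_eq_mul, Prod.mk_mul_mk]
    refine Prod.ext ?_ ?_ <;> simp [zsmul_eq_mul] <;> push_cast <;> ring
end

section
/- Let n_1, …, n_k be positive integers and a_1, …, a_k be natural numbers. The additive subgroup of the product ring ℤ_{n_1} × ℤ_{n_2} × ⋯ × ℤ_{n_k} generated by the single element (a_1 mod n_1, …, a_k mod n_k) is an ideal if and only if for every pair of indices i < j one has gcd( n_i/gcd(a_i, n_i), n_j/gcd(a_j, n_j) ) = 1 (equivalently, the product over all pairs i < j of these gcds equals 1). -/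
set_option maxHeartbeats 1000000

lemma crt_int (k : ℕ) (d : Fin k → ℕ)
    (hd : ∀ i j, i ≠ j → Nat.gcd (d i) (d j) = 1) (c : Fin k → ℤ) :
    ∃ m : ℤ, ∀ i, (d i : ℤ) ∣ m - c i := by
  induction k with
  | zero => exact ⟨0, fun i => i.elim0⟩
  | succ k ih =>
    obtain ⟨m, hm⟩ := ih (fun i => d i.succ)
      (fun i j hij => hd i.succ j.succ (by simpa using hij)) (fun i => c i.succ)
    set P : ℤ := ∏ i : Fin k, (d i.succ : ℤ) with hP
    have hcop : IsCoprime (d 0 : ℤ) P := by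
      apply IsCoprime.prod_right
      intro i _
      exact Nat.isCoprime_iff_coprime.mpr (hd 0 i.succ (Fin.succ_ne_zero i).symm)
    obtain ⟨u, v, huv⟩ := hcop
    refine ⟨c 0 * v * P + m * u * (d 0 : ℤ), fun i => ?_⟩
    induction i using Fin.cases with
    | zero =>
      have : c 0 * v * P + m * u * (d 0 : ℤ) - c 0
          = (m - c 0) * u * (d 0 : ℤ) := by linear_combination c 0 * huv
      rw [this]
      exact Dvd.intro_left _ rfl
    | succ i =>
      have : c 0 * v * P + m * u * (d 0 : ℤ) - c i.succ
          = (c 0 - m) * (v * P) + (m - c i.succ) := by linear_combination m * huv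
      rw [this]
      refine dvd_add (Dvd.dvd.mul_left ?_ _) (hm i)
      exact dvd_mul_of_dvd_right (Finset.dvd_prod_of_mem _ (Finset.mem_univ i)) _


/-- The subgroup of `ℤ_{n₁} × ⋯ × ℤ_{n_k}` generated by `(a₁, …, a_k)` is an ideal
iff for every pair `i < j`, `gcd(nᵢ / gcd(aᵢ, nᵢ), nⱼ / gcd(aⱼ, nⱼ)) = 1`. -/
theorem zmod_pi_cyclic_subgroup_ideal_iff (k : ℕ) (n : Fin k → ℕ)
    (hn : ∀ i, 0 < n i) (a : Fin k → ℕ) :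
    (∃ I : Ideal (∀ i, ZMod (n i)),
      (I : Set (∀ i, ZMod (n i))) =
        (AddSubgroup.zmultiples (fun i => (a i : ZMod (n i))) : Set (∀ i, ZMod (n i)))) ↔
    ∀ i j : Fin k, i < j →
      Nat.gcd (n i / Nat.gcd (a i) (n i)) (n j / Nat.gcd (a j) (n j)) = 1 := by
  have hNZ : ∀ i, NeZero (n i) := fun i => ⟨(hn i).ne'⟩
  set x : ∀ i, ZMod (n i) := fun i => (a i : ZMod (n i)) with hx
  have hord : ∀ i, addOrderOf (x i) = n i / Nat.gcd (a i) (n i) := by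
    intro i
    rw [hx, ZMod.addOrderOf_coe _ (hn i).ne', Nat.gcd_comm]
  constructor
  · rintro ⟨I, hI⟩ i j hij
    have hxI : x ∈ I := by
      rw [← SetLike.mem_coe, hI]; exact AddSubgroup.mem_zmultiples x
    have hmem : (Pi.single i (1 : ZMod (n i))) * x ∈ I := I.mul_mem_left _ hxI
    rw [← SetLike.mem_coe, hI] at hmem
    rw [SetLike.mem_coe, AddSubgroup.mem_zmultiples_iff] at hmem
    obtain ⟨m, hm⟩ := hmem
    have hji : j ≠ i := hij.ne'
    have hmj : m • x j = 0 := by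
      have := congrFun hm j
      simpa [Pi.single_apply, hji] using this
    have hmi : (m - 1) • x i = 0 := by
      have := congrFun hm i
      simp [Pi.single_apply] at this
      rw [sub_smul, one_smul, zsmul_eq_mul, this, sub_self]
    rw [← addOrderOf_dvd_iff_zsmul_eq_zero, hord] at hmj hmi
    set di := n i / Nat.gcd (a i) (n i)
    set dj := n j / Nat.gcd (a j) (n j)
    have hg : (Nat.gcd di dj : ℤ) ∣ 1 := by
      have h1 : (Nat.gcd di dj : ℤ) ∣ m - 1 :=
        dvd_trans (Int.natCast_dvd_natCast.mpr (Nat.gcd_dvd_left di dj)) hmi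
      have h2 : (Nat.gcd di dj : ℤ) ∣ m :=
        dvd_trans (Int.natCast_dvd_natCast.mpr (Nat.gcd_dvd_right di dj)) hmj
      have := dvd_sub h2 h1
      simpa using this
    exact_mod_cast Int.eq_one_of_dvd_one (by positivity) hg
  · intro h
    refine ⟨Ideal.span {x}, ?_⟩
    apply le_antisymm
    · intro y hy
      rw [SetLike.mem_coe, Ideal.mem_span_singleton'] at hy
      obtain ⟨r, hr⟩ := hy
      have hd : ∀ i j : Fin k, i ≠ j →
          Nat.gcd (n i / Nat.gcd (a i) (n i)) (n j / Nat.gcd (a j) (n j)) = 1 := by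
        intro i j hij
        rcases lt_or_gt_of_ne hij with h' | h'
        · exact h i j h'
        · rw [Nat.gcd_comm]; exact h j i h'
      obtain ⟨m, hm⟩ := crt_int k (fun i => n i / Nat.gcd (a i) (n i)) hd
        (fun i => ((r i).val : ℤ))
      rw [SetLike.mem_coe, AddSubgroup.mem_zmultiples_iff]
      refine ⟨m, ?_⟩
      funext i
      have hdvd : (addOrderOf (x i) : ℤ) ∣ m - ((r i).val : ℤ) := by
        rw [hord]; exact hm i
      rw [addOrderOf_dvd_iff_zsmul_eq_zero, sub_smul] at hdvd
      have hri : (((r i).val : ℤ) : ZMod (n i)) = r i := by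
        haveI := hNZ i
        rw [Int.cast_natCast, ZMod.natCast_val, ZMod.cast_id]
      have : m • x i = (((r i).val : ℤ)) • x i := by
        have := sub_eq_zero.mp hdvd; exact this
      rw [Pi.smul_apply, this, ← hr]
      simp only [Pi.mul_apply]
      rw [zsmul_eq_mul, hri]
    · intro y hy
      rw [SetLike.mem_coe, AddSubgroup.mem_zmultiples_iff] at hy
      obtain ⟨m, hm⟩ := hy
      rw [SetLike.mem_coe, ← hm]
      exact zsmul_mem (Ideal.subset_span (Set.mem_singleton x)) m
end

section
/- Let n, m be positive integers and let (a, b) and (c, d) be elements of ℤ_n × ℤ_m (so a, c ∈ ℤ_n and b, d ∈ ℤ_m). For α, β ∈ ℤ_n let φ_{α,β} : ℤ × ℤ → ℤ_n be the additive group homomorphism φ_{α,β}(x, y) = αx + βy. Then the additive subgroup of ℤ_n × ℤ_m generated by (a, b) and (c, d) is an ideal of the product ring ℤ_n × ℤ_m if and only if (ker φ_{a,c})(ker φ_{b,d}) = ℤ × ℤ, i.e., every element of ℤ × ℤ is the sum of an element of ker φ_{a,c} and an element of ker φ_{b,d} (equivalently, the join of the two kernels as additive subgroups of ℤ × ℤ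 is all of ℤ × ℤ). -/
/-- For `α β : ZMod n`, the additive homomorphism `ℤ × ℤ → ZMod n`,
`(x, y) ↦ x • α + y • β`. -/
def phiMap {n : ℕ} (α β : ZMod n) : ℤ × ℤ →+ ZMod n where
  toFun p := p.1 • α + p.2 • β
  map_zero' := by simp
  map_add' p q := by
    simp only [Prod.fst_add, Prod.snd_add, add_zsmul]
    abel

lemma phiMap_apply {n : ℕ} (α β : ZMod n) (x y : ℤ) :
    phiMap α β (x, y) = x • α + y • β := rfl

/-- The subgroup of `ℤ_n × ℤ_m` generated by `(a, b)` and `(c, d)` is an ideal iff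
`(ker φ_{a,c}) + (ker φ_{b,d}) = ℤ × ℤ`. -/
theorem zmod_prod_two_gen_subgroup_ideal_iff (n m : ℕ) (hn : 0 < n) (hm : 0 < m)
    (a c : ZMod n) (b d : ZMod m) :
    (∃ I : Ideal (ZMod n × ZMod m),
      (I : Set (ZMod n × ZMod m)) =
        (AddSubgroup.closure {(a, b), (c, d)} : Set (ZMod n × ZMod m))) ↔
    (phiMap a c).ker ⊔ (phiMap b d).ker = (⊤ : AddSubgroup (ℤ × ℤ)) := by
  constructor
  · rintro ⟨I, hI⟩
    have hmem : ∀ z : ZMod n × ZMod m,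
        z ∈ I ↔ z ∈ AddSubgroup.closure {(a, b), (c, d)} := by
      intro z
      rw [← SetLike.mem_coe, hI, SetLike.mem_coe]
    have hab : (a, b) ∈ I := (hmem _).2 (AddSubgroup.subset_closure (by simp))
    have hcd : (c, d) ∈ I := (hmem _).2 (AddSubgroup.subset_closure (by simp))
    -- (a, 0) ∈ I
    have ha0 : ((a, 0) : ZMod n × ZMod m) ∈ I := by
      have := I.mul_mem_left ((1 : ZMod n), (0 : ZMod m)) hab
      simpa using this
    have hc0 : ((c, 0) : ZMod n × ZMod m) ∈ I := by
      have := I.mul_mem_left ((1 : ZMod n), (0 : ZMod m)) hcd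
      simpa using this
    obtain ⟨x, y, hxy⟩ := AddSubgroup.mem_closure_pair.1 ((hmem _).1 ha0)
    obtain ⟨x', y', hxy'⟩ := AddSubgroup.mem_closure_pair.1 ((hmem _).1 hc0)
    rw [Prod.ext_iff] at hxy hxy'
    simp only [Prod.smul_mk, Prod.fst_add, Prod.snd_add, Prod.fst, Prod.snd] at hxy hxy'
    obtain ⟨h1, h2⟩ := hxy
    obtain ⟨h1', h2'⟩ := hxy'
    -- (1,0) ∈ sup
    have h10 : ((1, 0) : ℤ × ℤ) ∈ (phiMap a c).ker ⊔ (phiMap b d).ker := by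
      refine AddSubgroup.mem_sup.2 ⟨(1 - x, -y), ?_, (x, y), ?_, by simp⟩
      · rw [AddMonoidHom.mem_ker, phiMap_apply]
        have he : (1 - x) • a + (-y) • c = a - (x • a + y • c) := by
          simp only [sub_zsmul, neg_zsmul, one_zsmul]; abel
        rw [he, h1, sub_self]
      · rw [AddMonoidHom.mem_ker, phiMap_apply]; exact h2
    have h01 : ((0, 1) : ℤ × ℤ) ∈ (phiMap a c).ker ⊔ (phiMap b d).ker := by
      refine AddSubgroup.mem_sup.2 ⟨(-x', 1 - y'), ?_, (x', y'), ?_, by simp⟩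
      · rw [AddMonoidHom.mem_ker, phiMap_apply]
        have he : (-x') • a + (1 - y') • c = c - (x' • a + y' • c) := by
          simp only [sub_zsmul, neg_zsmul, one_zsmul]; abel
        rw [he, h1', sub_self]
      · rw [AddMonoidHom.mem_ker, phiMap_apply]; exact h2' 
    rw [AddSubgroup.eq_top_iff']
    intro p
    have hp : p = p.1 • ((1, 0) : ℤ × ℤ) + p.2 • ((0, 1) : ℤ × ℤ) := by
      simp [Prod.ext_iff]
    rw [hp]
    exact add_mem (zsmul_mem h10 _) (zsmul_mem h01 _)
  · intro hker
    refine ⟨Ideal.span {(a, b), (c, d)}, ?_⟩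
    ext z
    simp only [SetLike.mem_coe]
    constructor
    · intro hz
      obtain ⟨r, s, hrs⟩ := Ideal.mem_span_pair.1 hz
      obtain ⟨r1, hr1⟩ := ZMod.intCast_surjective r.1
      obtain ⟨r2, hr2⟩ := ZMod.intCast_surjective r.2
      obtain ⟨s1, hs1⟩ := ZMod.intCast_surjective s.1
      obtain ⟨s2, hs2⟩ := ZMod.intCast_surjective s.2
      have htop : ((r1 - r2, s1 - s2) : ℤ × ℤ) ∈ (phiMap a c).ker ⊔ (phiMap b d).ker := by
        rw [hker]; trivial
      obtain ⟨u, hu, v, hv, huv⟩ := AddSubgroup.mem_sup.1 htop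
      rw [AddMonoidHom.mem_ker] at hu hv
      refine AddSubgroup.mem_closure_pair.2 ⟨r1 - u.1, s1 - u.2, ?_⟩
      rw [← hrs]
      have hu1 : u.1 • a + u.2 • c = 0 := hu
      have hv1 : v.1 • b + v.2 • d = 0 := hv
      have huv1 : u.1 + v.1 = r1 - r2 := congrArg Prod.fst huv
      have huv2 : u.2 + v.2 = s1 - s2 := congrArg Prod.snd huv
      have e1 : (r1 - u.1) • a + (s1 - u.2) • c = r.1 * a + s.1 * c := by
        have he : (r1 - u.1) • a + (s1 - u.2) • c
            = r1 • a + s1 • c - (u.1 • a + u.2 • c) := by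
          simp only [sub_zsmul]; abel
        rw [he, hu1, sub_zero, zsmul_eq_mul, zsmul_eq_mul, hr1, hs1]
      have e2 : (r1 - u.1) • b + (s1 - u.2) • d = r.2 * b + s.2 * d := by
        have hx : r1 - u.1 = r2 + v.1 := by omega
        have hy : s1 - u.2 = s2 + v.2 := by omega
        rw [hx, hy]
        have he : (r2 + v.1) • b + (s2 + v.2) • d
            = r2 • b + s2 • d + (v.1 • b + v.2 • d) := by
          simp only [add_zsmul]; abel
        rw [he, hv1, add_zero, zsmul_eq_mul, zsmul_eq_mul, hr2, hs2]
      have lhs : (r1 - u.1) • ((a, b) : ZMod n × ZMod m) + (s1 - u.2) • ((c, d) : ZMod n × ZMod m)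
          = ((r1 - u.1) • a + (s1 - u.2) • c, (r1 - u.1) • b + (s1 - u.2) • d) := rfl
      have rhs : r * ((a, b) : ZMod n × ZMod m) + s * ((c, d) : ZMod n × ZMod m)
          = (r.1 * a + s.1 * c, r.2 * b + s.2 * d) := rfl
      rw [lhs, rhs, e1, e2]
    · intro hz
      obtain ⟨x, y, hxy⟩ := AddSubgroup.mem_closure_pair.1 hz
      rw [← hxy]
      have h1 : ((a, b) : ZMod n × ZMod m) ∈ Ideal.span {(a, b), (c, d)} :=
        Ideal.subset_span (by simp)
      have h2 : ((c, d) : ZMod n × ZMod m) ∈ Ideal.span {(a, b), (c, d)} :=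
        Ideal.subset_span (by simp)
      exact add_mem (zsmul_mem h1 x) (zsmul_mem h2 y)
end

section
/- For a finite commutative ring R, let P_R denote the ratio (number of ideals of R) / (number of additive subgroups of (R, +)), as a rational number. Let n_1, m_1, n_2, m_2 be positive integers such that n_1 m_1 and n_2 m_2 are coprime. Then P_{ℤ_{n_1 n_2} × ℤ_{m_1 m_2}} = P_{ℤ_{n_1} × ℤ_{m_1}} · P_{ℤ_{n_2} × ℤ_{m_2}}. -/
/-!
Multiplying by `|B|` kills the `B`-coordinate of `A × B` and is invertible on `A` when `|A|` and
`|B|` are coprime, so every additive subgroup of `A × B` is the product of its two projections.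
Hence additive subgroups, like ideals, of a product of rings of coprime orders are pairs, and `P`
is multiplicative on such products. The Chinese remainder theorem rewrites
`ℤ_{n₁n₂} × ℤ_{m₁m₂}` as `(ℤ_{n₁} × ℤ_{m₁}) × (ℤ_{n₂} × ℤ_{m₂})`, whose factors have the coprime
orders `n₁m₁` and `n₂m₂`.
-/

/-- The probability that a randomly chosen additive subgroup of a finite ring `R`
is an ideal: the number of ideals divided by the number of additive subgroups. -/
noncomputable def idealProb (R : Type*) [CommRing R] : ℚ :=
  (Nat.card (Ideal R) : ℚ) / (Nat.card (AddSubgroup R) : ℚ)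

namespace AddSubgroup

variable {A B : Type*} [AddGroup A] [AddGroup B]

theorem mk_zero_mem_of_mk_mem (hAB : (Nat.card A).Coprime (Nat.card B))
    {H : AddSubgroup (A × B)} {a : A} {b : B} (h : (a, b) ∈ H) : (a, (0 : B)) ∈ H := by
  have hsmul : (Nat.card A).gcdB (Nat.card B) • Nat.card B • (a, b) = (a, (0 : B)) := by
    ext
    · exact (nsmulCoprime hAB).symm_apply_apply a
    · simp [card_nsmul_eq_zero']
  exact hsmul ▸ zsmul_mem (nsmul_mem h _) _

theorem zero_mk_mem_of_mk_mem (hAB : (Nat.card A).Coprime (Nat.card B))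
    {H : AddSubgroup (A × B)} {a : A} {b : B} (h : (a, b) ∈ H) : ((0 : A), b) ∈ H := by
  have : (b, a) ∈ H.comap (AddEquiv.prodComm : B × A ≃+ A × B).toAddMonoidHom := h
  exact mk_zero_mem_of_mk_mem hAB.symm this

theorem eq_prod_map_fst_map_snd (hAB : (Nat.card A).Coprime (Nat.card B))
    (H : AddSubgroup (A × B)) :
    H = (H.map (AddMonoidHom.fst A B)).prod (H.map (AddMonoidHom.snd A B)) := by
  refine le_antisymm (fun x hx => ⟨⟨x, hx, rfl⟩, ⟨x, hx, rfl⟩⟩) ?_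
  rintro ⟨a, b⟩ ⟨⟨⟨a, b'⟩, ha, rfl⟩, ⟨⟨a', b⟩, hb, rfl⟩⟩
  simpa using add_mem (mk_zero_mem_of_mk_mem hAB ha) (zero_mk_mem_of_mk_mem hAB hb)

noncomputable def prodEquivOfCoprime (hAB : (Nat.card A).Coprime (Nat.card B)) :
    AddSubgroup (A × B) ≃ AddSubgroup A × AddSubgroup B where
  toFun H := (H.map (AddMonoidHom.fst A B), H.map (AddMonoidHom.snd A B))
  invFun P := P.1.prod P.2
  left_inv H := (eq_prod_map_fst_map_snd hAB H).symm
  right_inv := by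
    rintro ⟨K, L⟩
    refine Prod.ext (le_antisymm ?_ fun a ha => ⟨(a, 0), ⟨ha, L.zero_mem⟩, rfl⟩)
      (le_antisymm ?_ fun b hb => ⟨(0, b), ⟨K.zero_mem, hb⟩, rfl⟩)
    · rintro _ ⟨x, hx, rfl⟩
      exact hx.1
    · rintro _ ⟨x, hx, rfl⟩
      exact hx.2

end AddSubgroup

theorem idealProb_congr {R S : Type*} [CommRing R] [CommRing S] (e : R ≃+* S) :
    idealProb R = idealProb S := by
  rw [idealProb, idealProb, Nat.card_congr e.idealComapOrderIso.toEquiv,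
    Nat.card_congr e.toAddEquiv.mapAddSubgroup.toEquiv]

theorem idealProb_prod {R S : Type*} [CommRing R] [CommRing S]
    (h : (Nat.card R).Coprime (Nat.card S)) :
    idealProb (R × S) = idealProb R * idealProb S := by
  rw [idealProb, Nat.card_congr Ideal.idealProdEquiv.toEquiv,
    Nat.card_congr (AddSubgroup.prodEquivOfCoprime h), Nat.card_prod, Nat.card_prod,
    Nat.cast_mul, Nat.cast_mul, mul_div_mul_comm, idealProb, idealProb]

theorem idealProb_mul_general (n₁ m₁ n₂ m₂ : ℕ) (hcop : Nat.Coprime (n₁ * m₁) (n₂ * m₂)) :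
    idealProb (ZMod (n₁ * n₂) × ZMod (m₁ * m₂)) =
      idealProb (ZMod n₁ × ZMod m₁) * idealProb (ZMod n₂ × ZMod m₂) := by
  have hn : n₁.Coprime n₂ := hcop.coprime_mul_right.coprime_mul_right_right
  have hm : m₁.Coprime m₂ := hcop.coprime_mul_left.coprime_mul_left_right
  have hcard : (Nat.card (ZMod n₁ × ZMod m₁)).Coprime (Nat.card (ZMod n₂ × ZMod m₂)) := by
    simpa only [Nat.card_prod, Nat.card_zmod] using hcop
  rw [idealProb_congr ((RingEquiv.prodCongr (ZMod.chineseRemainder hn)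
      (ZMod.chineseRemainder hm)).trans (RingEquiv.prodProdProdComm _ _ _ _)),
    idealProb_prod hcard]

/-- If `n₁m₁` and `n₂m₂` are coprime, then
`P_{ℤ_{n₁n₂} × ℤ_{m₁m₂}} = P_{ℤ_{n₁} × ℤ_{m₁}} · P_{ℤ_{n₂} × ℤ_{m₂}}`. -/
theorem idealProb_mul (n₁ m₁ n₂ m₂ : ℕ) (hn₁ : 0 < n₁) (hm₁ : 0 < m₁)
    (hn₂ : 0 < n₂) (hm₂ : 0 < m₂) (hcop : Nat.Coprime (n₁ * m₁) (n₂ * m₂)) :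
    idealProb (ZMod (n₁ * n₂) × ZMod (m₁ * m₂)) =
      idealProb (ZMod n₁ × ZMod m₁) * idealProb (ZMod n₂ × ZMod m₂) :=
  idealProb_mul_general n₁ m₁ n₂ m₂ hcop
end

section
/- Let p be a prime and r ≤ s non-negative integers. The total number N of additive subgroups of ℤ_{p^r} × ℤ_{p^s} satisfies N·(p − 1)² = p^{r+1}·[(s − r + 1)(p − 1) + 2] − [(s + r + 3)(p − 1) + 2] (an identity of integers). -/
/-!
A subgroup `H ≤ A × B` is determined by its projection `I` to `A`, its intersection `K` with
`0 × B`, and the homomorphism `I → B ⧸ K` whose graph it is. For finite cyclic groups a subgroup is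
determined by its order (equivalently, its index), and there are `gcd m n` homomorphisms from a
cyclic group of order `m` to one of order `n`. For `ℤ_{p^r} × ℤ_{p^s}` this gives
`N = ∑_{i ≤ r} ∑_{j ≤ s} p^{min(i,j)}`, a double geometric sum that evaluates row by row to the
closed form.
-/

open AddSubgroup QuotientAddGroup Finset

namespace AddSubgroup

section Goursat

variable {A B : Type*} [AddCommGroup A] [AddCommGroup B]

def graphOver (I : AddSubgroup A) (K : AddSubgroup B) (f : I →+ B ⧸ K) :
    AddSubgroup (A × B) where
  carrier := {x | ∃ h : x.1 ∈ I, (x.2 : B ⧸ K) = f ⟨x.1, h⟩}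
  zero_mem' := ⟨zero_mem I, (map_zero f).symm⟩
  add_mem' := by
    rintro x y ⟨hx, hfx⟩ ⟨hy, hfy⟩
    refine ⟨add_mem hx hy, ?_⟩
    change ((x.2 + y.2 : B) : B ⧸ K) = f (⟨x.1, hx⟩ + ⟨y.1, hy⟩)
    rw [map_add, ← hfx, ← hfy, QuotientAddGroup.mk_add]
  neg_mem' := by
    rintro x ⟨hx, hfx⟩
    refine ⟨neg_mem hx, ?_⟩
    change ((-x.2 : B) : B ⧸ K) = f (-⟨x.1, hx⟩)
    rw [map_neg, ← hfx, QuotientAddGroup.mk_neg]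

variable {I : AddSubgroup A} {K : AddSubgroup B} {f : I →+ B ⧸ K}

theorem map_fst_graphOver : (graphOver I K f).map (AddMonoidHom.fst A B) = I := by
  ext a
  refine ⟨fun ⟨x, ⟨hx, _⟩, hxa⟩ => hxa ▸ hx, fun ha => ?_⟩
  obtain ⟨b, hb⟩ := QuotientAddGroup.mk_surjective (f ⟨a, ha⟩)
  exact ⟨(a, b), ⟨ha, hb⟩, rfl⟩

theorem comap_inr_graphOver : (graphOver I K f).comap (AddMonoidHom.inr A B) = K := by
  ext b
  change (∃ h : (0 : A) ∈ I, (b : B ⧸ K) = f ⟨0, h⟩) ↔ b ∈ K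
  exact ⟨fun ⟨_, hb⟩ => (QuotientAddGroup.eq_zero_iff b).mp (hb.trans (map_zero f)),
    fun hb => ⟨zero_mem I, ((QuotientAddGroup.eq_zero_iff b).mpr hb).trans (map_zero f).symm⟩⟩

theorem graphOver_injective :
    Function.Injective fun x : Σ (I : AddSubgroup A) (K : AddSubgroup B), I →+ B ⧸ K =>
      graphOver x.1 x.2.1 x.2.2 := by
  rintro ⟨I, K, f⟩ ⟨I', K', f'⟩ h
  dsimp only at h
  obtain rfl : I = I' := by rw [← map_fst_graphOver (f := f), h, map_fst_graphOver]
  obtain rfl : K = K' := by rw [← comap_inr_graphOver (f := f), h, comap_inr_graphOver]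
  suffices f = f' by rw [this]
  ext ⟨a, ha⟩
  obtain ⟨b, hb⟩ := QuotientAddGroup.mk_surjective (f ⟨a, ha⟩)
  obtain ⟨_, hb'⟩ : (a, b) ∈ graphOver I K f' := h ▸ ⟨ha, hb⟩
  exact hb.symm.trans hb'

theorem exists_graphOver_eq (H : AddSubgroup (A × B)) :
    ∃ (I : AddSubgroup A) (K : AddSubgroup B) (f : I →+ B ⧸ K), graphOver I K f = H := by
  set I := H.map (AddMonoidHom.fst A B)
  set K := H.comap (AddMonoidHom.inr A B)
  let g : H →+ I × (B ⧸ K) :=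
    ((AddMonoidHom.fst A B).addSubgroupMap H).prod
      ((mk' K).comp ((AddMonoidHom.snd A B).comp H.subtype))
  -- two points of `H` over the same point of `I` differ by an element of `0 × K`
  have hvert : ∀ x y : H, (g x).1 = (g y).1 → (g x).2 = (g y).2 := by
    rintro ⟨x, hx⟩ ⟨y, hy⟩ hxy
    have h1 : x.1 = y.1 := congrArg Subtype.val hxy
    refine QuotientAddGroup.eq_iff_sub_mem.mpr ?_
    change (0, x.2 - y.2) ∈ H
    convert sub_mem hx hy using 1
    ext <;> simp [h1]
  obtain ⟨f, hf⟩ := AddMonoidHom.exists_range_eq_graph (f := g)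
    ((AddMonoidHom.fst A B).addSubgroupMap_surjective H) hvert
  refine ⟨I, K, f, ?_⟩
  ext ⟨a, b⟩
  constructor
  · rintro ⟨ha, hb⟩
    obtain ⟨⟨x, hx⟩, hgx⟩ : (⟨⟨a, ha⟩, (b : B ⧸ K)⟩ : I × (B ⧸ K)) ∈ g.range :=
      hf ▸ AddMonoidHom.mem_graph.mpr hb.symm
    obtain ⟨hxa, hxb⟩ := Prod.ext_iff.mp hgx
    have hx1 : x.1 = a := congrArg Subtype.val hxa
    have hK : (0, b - x.2) ∈ H := QuotientAddGroup.eq_iff_sub_mem.mp hxb.symm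
    convert add_mem hx hK using 1
    ext <;> simp [hx1]
  · intro hab
    refine ⟨⟨(a, b), hab, rfl⟩, ?_⟩
    have : g ⟨(a, b), hab⟩ ∈ f.graph := hf ▸ ⟨⟨(a, b), hab⟩, rfl⟩
    exact (AddMonoidHom.mem_graph.mp this).symm

theorem card_addSubgroup_prod [Finite A] [Finite B] [Fintype (AddSubgroup A)]
    [Fintype (AddSubgroup B)] :
    Nat.card (AddSubgroup (A × B)) =
      ∑ I : AddSubgroup A, ∑ K : AddSubgroup B, Nat.card (I →+ B ⧸ K) := by
  have (I : AddSubgroup A) (K : AddSubgroup B) : Finite (I →+ B ⧸ K) :=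
    Finite.of_injective _ DFunLike.coe_injective
  rw [← Nat.card_eq_of_bijective _ ⟨graphOver_injective, fun H => ?_⟩]
  · simp only [Nat.card_sigma]
  · obtain ⟨I, K, f, h⟩ := exists_graphOver_eq H
    exact ⟨⟨I, K, f⟩, h⟩

end Goursat

end AddSubgroup

theorem ZMod.card_addMonoidHom (n : ℕ) (B : Type*) [AddCommGroup B] :
    Nat.card (ZMod n →+ B) = Nat.card (nsmulAddMonoidHom n : B →+ B).ker :=
  Nat.card_congr <| (ZMod.lift n).symm.trans <|
    Equiv.subtypeEquiv (zmultiplesHom B).symm fun f => by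
      rw [AddMonoidHom.mem_ker, nsmulAddMonoidHom_apply, zmultiplesHom_symm_apply,
        ← map_nsmul, nsmul_one]

namespace IsAddCyclic

variable {G : Type*} [AddCommGroup G] [IsAddCyclic G] [Finite G]

theorem card_addMonoidHom (A : Type*) [AddCommGroup A] [IsAddCyclic A] [Finite A] :
    Nat.card (A →+ G) = (Nat.card G).gcd (Nat.card A) := by
  rw [← card_nsmulAddMonoidHom_ker G (Nat.card A), ← ZMod.card_addMonoidHom]
  exact Nat.card_congr (AddEquiv.addMonoidHomCongrLeftEquiv (zmodAddCyclicAddEquiv ‹_›)).symm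

theorem eq_ker_nsmul_card (H : AddSubgroup G) :
    H = (nsmulAddMonoidHom (Nat.card H) : G →+ G).ker := by
  refine eq_of_le_of_card_ge (fun x hx => ?_) ?_
  · exact congrArg Subtype.val (card_nsmul_eq_zero' (x := (⟨x, hx⟩ : H)))
  · rw [card_nsmulAddMonoidHom_ker, Nat.gcd_eq_right H.card_addSubgroup_dvd_card]

theorem sum_addSubgroup_card [Fintype (AddSubgroup G)] {M : Type*} [AddCommMonoid M]
    (f : ℕ → M) : ∑ H : AddSubgroup G, f (Nat.card H) = ∑ d ∈ (Nat.card G).divisors, f d := by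
  refine sum_nbij (Nat.card ·) (fun H _ => ?_) (fun H _ K _ hHK => ?_) (fun d hd => ?_)
    fun _ _ => rfl
  · exact Nat.mem_divisors.mpr ⟨H.card_addSubgroup_dvd_card, Nat.card_pos.ne'⟩
  · dsimp only at hHK
    rw [eq_ker_nsmul_card H, eq_ker_nsmul_card K, hHK]
  · refine ⟨(nsmulAddMonoidHom d : G →+ G).ker, mem_univ _, ?_⟩
    rw [Finset.mem_coe, Nat.mem_divisors] at hd
    simp only [card_nsmulAddMonoidHom_ker, Nat.gcd_eq_right hd.1]

theorem sum_addSubgroup_index [Fintype (AddSubgroup G)] {M : Type*} [AddCommMonoid M]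
    (f : ℕ → M) : ∑ H : AddSubgroup G, f H.index = ∑ d ∈ (Nat.card G).divisors, f d := by
  have hindex (H : AddSubgroup G) : H.index = Nat.card G / Nat.card H := by
    rw [← H.index_mul_card, Nat.mul_div_cancel _ Nat.card_pos]
  simp_rw [hindex]
  rw [sum_addSubgroup_card (fun d => f (Nat.card G / d)), Nat.sum_div_divisors]

end IsAddCyclic

theorem card_addSubgroup_prod_of_isAddCyclic (A B : Type*) [AddCommGroup A] [AddCommGroup B]
    [IsAddCyclic A] [Finite A] [IsAddCyclic B] [Finite B] :
    Nat.card (AddSubgroup (A × B)) =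
      ∑ d ∈ (Nat.card A).divisors, ∑ e ∈ (Nat.card B).divisors, d.gcd e := by
  let := Fintype.ofFinite (AddSubgroup A)
  let := Fintype.ofFinite (AddSubgroup B)
  have hterm (I : AddSubgroup A) (K : AddSubgroup B) :
      Nat.card (I →+ B ⧸ K) = (Nat.card I).gcd K.index := by
    have := isAddCyclic_of_surjective _ (mk'_surjective K)
    exact (IsAddCyclic.card_addMonoidHom I).trans (Nat.gcd_comm _ _)
  simp_rw [card_addSubgroup_prod, hterm, IsAddCyclic.sum_addSubgroup_index]
  exact IsAddCyclic.sum_addSubgroup_card fun d => ∑ e ∈ (Nat.card B).divisors, d.gcd e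

theorem Nat.gcd_pow_pow (p a b : ℕ) : (p ^ a).gcd (p ^ b) = p ^ min a b := by
  rcases le_total a b with h | h
  · rw [Nat.gcd_eq_left (pow_dvd_pow p h), min_eq_left h]
  · rw [Nat.gcd_eq_right (pow_dvd_pow p h), min_eq_right h]

theorem card_addSubgroup_zmod_prime_pow_prod_eq_sum {p : ℕ} (hp : p.Prime) (r s : ℕ) :
    Nat.card (AddSubgroup (ZMod (p ^ r) × ZMod (p ^ s))) =
      ∑ i ∈ range (r + 1), ∑ j ∈ range (s + 1), p ^ min i j := by
  have : NeZero p := ⟨hp.ne_zero⟩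
  rw [card_addSubgroup_prod_of_isAddCyclic, Nat.card_zmod, Nat.card_zmod,
    Nat.sum_divisors_prime_pow hp]
  simp_rw [Nat.sum_divisors_prime_pow hp, Nat.gcd_pow_pow]

theorem sum_range_pow_min {R : Type*} [CommRing R] (x : R) {i s : ℕ} (his : i ≤ s) :
    ∑ j ∈ range (s + 1), x ^ min i j = ∑ j ∈ range i, x ^ j + ((s : R) - i + 1) * x ^ i := by
  rw [← sum_range_add_sum_Ico _ (by omega : i ≤ s + 1)]
  congr 1
  · exact sum_congr rfl fun j hj => by rw [min_eq_right (mem_range.mp hj).le]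
  · rw [sum_congr rfl fun j hj => by rw [min_eq_left (mem_Ico.mp hj).1], sum_const,
      Nat.card_Ico, nsmul_eq_mul, Nat.cast_sub (by omega)]
    push_cast
    ring

theorem sum_range_sum_range_pow_min_mul_sub_one_sq {R : Type*} [CommRing R] (x : R) {r s : ℕ}
    (hrs : r ≤ s) :
    (∑ i ∈ range (r + 1), ∑ j ∈ range (s + 1), x ^ min i j) * (x - 1) ^ 2 =
      x ^ (r + 1) * (((s : R) - r + 1) * (x - 1) + 2) - (((s : R) + r + 3) * (x - 1) + 2) := by
  induction r with
  | zero =>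
    rw [sum_range_one, sum_range_pow_min x hrs]
    simp only [sum_range_zero, Nat.cast_zero, pow_zero, zero_add]
    ring
  | succ r ih =>
    rw [sum_range_succ, add_mul, ih (by omega), sum_range_pow_min x hrs]
    push_cast
    linear_combination (x - 1) * geom_sum_mul x (r + 1)

/-- Counting subgroups of `ℤ_{p^r} × ℤ_{p^s}` (`r ≤ s`): the number `N` of additive
subgroups satisfies
`N(p-1)² = p^{r+1}[(s-r+1)(p-1)+2] - [(s+r+3)(p-1)+2]` as integers. -/
theorem card_addSubgroups_zmod_prime_pow_prod (p : ℕ) (hp : p.Prime) (r s : ℕ)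
    (hrs : r ≤ s) :
    (Nat.card (AddSubgroup (ZMod (p ^ r) × ZMod (p ^ s))) : ℤ) * ((p : ℤ) - 1) ^ 2 =
      (p : ℤ) ^ (r + 1) * (((s : ℤ) - (r : ℤ) + 1) * ((p : ℤ) - 1) + 2) -
        (((s : ℤ) + (r : ℤ) + 3) * ((p : ℤ) - 1) + 2) := by
  rw [card_addSubgroup_zmod_prime_pow_prod_eq_sum hp]
  push_cast
  exact sum_range_sum_range_pow_min_mul_sub_one_sq (p : ℤ) hrs
end
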